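/- Let C and D be Z-type complexes over 𝔽₂, let V be a common separated logical operator subcomplex of C (determined by u, chain map f) and of D (determined by v, chain map g), let W be the sandwich complex built from ∂^V with left and right inclusions ℓ, ρ : V → W, and let T be the sandwiched complex. Then the cosystolic distance of the sandwiched code satisfies d^X(T) ≥ min(d^X(C), d^X(D)). -/
import Mathlib


/-!
STATEMENT 13: The cosystolic distance of the sandwiched code T obtained by
gluing Z-type complexes C and D on either side of the sandwich complex
W = P ⊗ V satisfies d^X(T) ≥ min(d^X(C), d^X(D)): every X-logical of T
dominates in Hamming weight some X-logical of C or of D.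
-/

abbrev F2 := ZMod 2

/-- Coordinate inclusion of 𝔽₂^α into 𝔽₂^β along an embedding ι : α ↪ β. -/
noncomputable def incl {α β : Type} [Fintype α] [DecidableEq β] (ι : α ↪ β) :
    (α → F2) →ₗ[F2] (β → F2) :=
  Matrix.mulVecLin (Matrix.of fun j i => if j = ι i then 1 else 0)

/-- Hamming weight of a vector in 𝔽₂^α. -/
def wtv {α : Type} [Fintype α] (y : α → F2) : ℕ :=
  (Finset.univ.filter fun j => y j ≠ 0).card

/-- Standard 𝔽₂ dot product. -/
def dotP {α : Type} [Fintype α] (x y : α → F2) : F2 := ∑ j, x j * y j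

/-- Dot product on a triple product of 𝔽₂ function spaces. -/
def dot3 {α β γ : Type} [Fintype α] [Fintype β] [Fintype γ]
    (p q : (α → F2) × ((β → F2) × (γ → F2))) : F2 :=
  dotP p.1 q.1 + dotP p.2.1 q.2.1 + dotP p.2.2 q.2.2

/-- Hamming weight on a triple product of 𝔽₂ function spaces. -/
def wt3 {α β γ : Type} [Fintype α] [Fintype β] [Fintype γ]
    (p : (α → F2) × ((β → F2) × (γ → F2))) : ℕ :=
  wtv p.1 + wtv p.2.1 + wtv p.2.2

/-- Degree-0 differential of the sandwich complex W: x ↦ (x, x, ∂^V x). -/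
noncomputable def sandD0 {T0 Tm : Type} (dV : (T0 → F2) →ₗ[F2] (Tm → F2)) :
    (T0 → F2) →ₗ[F2] ((T0 → F2) × ((T0 → F2) × (Tm → F2))) :=
  LinearMap.id.prod (LinearMap.id.prod dV)

/-- Degree-(-1) differential of the sandwich complex W:
(a, b, c) ↦ (∂^V a + c, ∂^V b + c). -/
noncomputable def sandDm {T0 Tm : Type} (dV : (T0 → F2) →ₗ[F2] (Tm → F2)) :
    ((T0 → F2) × ((T0 → F2) × (Tm → F2))) →ₗ[F2] ((Tm → F2) × (Tm → F2)) :=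
  ((dV ∘ₗ LinearMap.fst F2 (T0 → F2) ((T0 → F2) × (Tm → F2))) +
      ((LinearMap.snd F2 (T0 → F2) (Tm → F2)) ∘ₗ
        (LinearMap.snd F2 (T0 → F2) ((T0 → F2) × (Tm → F2))))).prod
    ((dV ∘ₗ ((LinearMap.fst F2 (T0 → F2) (Tm → F2)) ∘ₗ
        (LinearMap.snd F2 (T0 → F2) ((T0 → F2) × (Tm → F2))))) +
      ((LinearMap.snd F2 (T0 → F2) (Tm → F2)) ∘ₗ
        (LinearMap.snd F2 (T0 → F2) ((T0 → F2) × (Tm → F2)))))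

/-- Left inclusion ℓ₋₁ : V₋₁ → W₋₁, t ↦ (t, 0). -/
noncomputable def lWm {Tm : Type} : (Tm → F2) →ₗ[F2] ((Tm → F2) × (Tm → F2)) :=
  LinearMap.id.prod 0

/-- Right inclusion ρ₋₁ : V₋₁ → W₋₁, t ↦ (0, t). -/
noncomputable def rWm {Tm : Type} : (Tm → F2) →ₗ[F2] ((Tm → F2) × (Tm → F2)) :=
  (0 : (Tm → F2) →ₗ[F2] (Tm → F2)).prod LinearMap.id

/-- The coequalizer map (C₀ ⊕ W₀ ⊕ D₀) → T₀ realizing the degree-0 component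
of the sandwiched complex concretely on the glued index set SC0 ⊕ Tm ⊕ SD0:
(x, (a, b, c), y) ↦ (x + f₀ a, c, y + g₀ b). -/
noncomputable def sandCoeq0 {SC0 SD0 T0 Tm : Type}
    [Fintype SC0] [Fintype SD0] [Fintype T0] [Fintype Tm]
    [DecidableEq SC0] [DecidableEq SD0]
    (ιC : T0 ↪ SC0) (ιD : T0 ↪ SD0) :
    ((SC0 → F2) × ((((T0 → F2) × ((T0 → F2) × (Tm → F2)))) × (SD0 → F2))) →ₗ[F2]
      ((SC0 → F2) × ((Tm → F2) × (SD0 → F2))) :=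
  ((LinearMap.fst F2 (SC0 → F2) ((((T0 → F2) × ((T0 → F2) × (Tm → F2)))) × (SD0 → F2))) +
      (incl ιC ∘ₗ
        (LinearMap.fst F2 (T0 → F2) ((T0 → F2) × (Tm → F2))) ∘ₗ
        (LinearMap.fst F2 ((T0 → F2) × ((T0 → F2) × (Tm → F2))) (SD0 → F2)) ∘ₗ
        (LinearMap.snd F2 (SC0 → F2)
          ((((T0 → F2) × ((T0 → F2) × (Tm → F2)))) × (SD0 → F2))))).prod
    ((((LinearMap.snd F2 (T0 → F2) (Tm → F2)) ∘ₗ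
        (LinearMap.snd F2 (T0 → F2) ((T0 → F2) × (Tm → F2))) ∘ₗ
        (LinearMap.fst F2 ((T0 → F2) × ((T0 → F2) × (Tm → F2))) (SD0 → F2)) ∘ₗ
        (LinearMap.snd F2 (SC0 → F2)
          ((((T0 → F2) × ((T0 → F2) × (Tm → F2)))) × (SD0 → F2))))).prod
      (((LinearMap.snd F2 ((T0 → F2) × ((T0 → F2) × (Tm → F2))) (SD0 → F2)) ∘ₗ
          (LinearMap.snd F2 (SC0 → F2)
            ((((T0 → F2) × ((T0 → F2) × (Tm → F2)))) × (SD0 → F2)))) +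
        (incl ιD ∘ₗ
          (LinearMap.fst F2 (T0 → F2) (Tm → F2)) ∘ₗ
          (LinearMap.snd F2 (T0 → F2) ((T0 → F2) × (Tm → F2))) ∘ₗ
          (LinearMap.fst F2 ((T0 → F2) × ((T0 → F2) × (Tm → F2))) (SD0 → F2)) ∘ₗ
          (LinearMap.snd F2 (SC0 → F2)
            ((((T0 → F2) × ((T0 → F2) × (Tm → F2)))) × (SD0 → F2))))))

set_option maxHeartbeats 1000000 in
theorem sandwiched_code_cosystolic_distance
    {SC1 SC0 SCm SD1 SD0 SDm T0 Tm : Type}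
    [Fintype SC1] [Fintype SC0] [Fintype SCm]
    [Fintype SD1] [Fintype SD0] [Fintype SDm] [Fintype T0] [Fintype Tm]
    [DecidableEq SC0] [DecidableEq SD0] [DecidableEq T0]
    (dC0 : (SC1 → F2) →ₗ[F2] (SC0 → F2)) (dCm : (SC0 → F2) →ₗ[F2] (SCm → F2))
    (dD0 : (SD1 → F2) →ₗ[F2] (SD0 → F2)) (dDm : (SD0 → F2) →ₗ[F2] (SDm → F2))
    (hC : dCm ∘ₗ dC0 = 0) (hD : dDm ∘ₗ dD0 = 0)
    (ιC : T0 ↪ SC0) (ιD : T0 ↪ SD0)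
    (hu : incl ιC 1 ∈ LinearMap.ker dCm) (hu' : incl ιC 1 ∉ LinearMap.range dC0)
    (hv : incl ιD 1 ∈ LinearMap.ker dDm) (hv' : incl ιD 1 ∉ LinearMap.range dD0)
    (fm : (Tm → F2) →ₗ[F2] (SCm → F2)) (gm : (Tm → F2) →ₗ[F2] (SDm → F2))
    (hfm : Function.Injective fm) (hgm : Function.Injective gm)
    (dV : (T0 → F2) →ₗ[F2] (Tm → F2)) (hdV : Function.Surjective dV)
    (hfC : dCm ∘ₗ incl ιC = fm ∘ₗ dV)
    (hgD : dDm ∘ₗ incl ιD = gm ∘ₗ dV)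
    (hsepC : ∀ u' : SC0 → F2, u' ∈ LinearMap.ker dCm → u' ∉ LinearMap.range dC0 →
      (∀ j, u' j ≠ 0 → incl ιC 1 j ≠ 0) → u' + incl ιC 1 ∈ LinearMap.range dC0)
    (hsepD : ∀ v' : SD0 → F2, v' ∈ LinearMap.ker dDm → v' ∉ LinearMap.range dD0 →
      (∀ j, v' j ≠ 0 → incl ιD 1 j ≠ 0) → v' + incl ιD 1 ∈ LinearMap.range dD0)
    (hsep3 : ∀ s : T0 → F2,
      (incl ιC s ∈ LinearMap.ker dCm ∧ incl ιC s ∉ LinearMap.range dC0) ↔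
      (incl ιD s ∈ LinearMap.ker dDm ∧ incl ιD s ∉ LinearMap.range dD0))
    -- the induced differential ∂₋₁^T on the concretely realized T₀
    (dTm : ((SC0 → F2) × ((Tm → F2) × (SD0 → F2))) →ₗ[F2]
      (((SCm → F2) × ((((Tm → F2) × (Tm → F2))) × (SDm → F2))) ⧸
        (LinearMap.range (fm.prod (lWm.prod (0 : (Tm → F2) →ₗ[F2] (SDm → F2)))) ⊔
         LinearMap.range ((0 : (Tm → F2) →ₗ[F2] (SCm → F2)).prod (rWm.prod gm)))))
    (hdTm : dTm ∘ₗ sandCoeq0 ιC ιD =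
      (LinearMap.range (fm.prod (lWm.prod (0 : (Tm → F2) →ₗ[F2] (SDm → F2)))) ⊔
         LinearMap.range ((0 : (Tm → F2) →ₗ[F2] (SCm → F2)).prod (rWm.prod gm))).mkQ ∘ₗ
        (dCm.prodMap ((sandDm dV).prodMap dDm))) :
    -- d^X(T) ≥ min(d^X(C), d^X(D))
    ∀ ξ : (SC0 → F2) × ((Tm → F2) × (SD0 → F2)),
      -- ξ is an X-cocycle of T ...
      (∀ x : (SC1 → F2) × ((T0 → F2) × (SD1 → F2)),
        dot3 (sandCoeq0 ιC ιD ((dC0.prodMap ((sandD0 dV).prodMap dD0)) x)) ξ = 0) →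
      -- ... which is not an X-coboundary of T
      (¬ ∃ ψ : (((SCm → F2) × ((((Tm → F2) × (Tm → F2))) × (SDm → F2))) ⧸
            (LinearMap.range (fm.prod (lWm.prod (0 : (Tm → F2) →ₗ[F2] (SDm → F2)))) ⊔
             LinearMap.range ((0 : (Tm → F2) →ₗ[F2] (SCm → F2)).prod
               (rWm.prod gm)))) →ₗ[F2] F2,
          ∀ z : (SC0 → F2) × ((Tm → F2) × (SD0 → F2)), dot3 z ξ = ψ (dTm z)) →
      -- ... dominates in weight some X-logical of C or of D
      (∃ z : SC0 → F2,
        ((∀ x : SC1 → F2, dotP (dC0 x) z = 0) ∧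
          ¬ ∃ ψ : (SCm → F2) →ₗ[F2] F2, ∀ w : SC0 → F2, dotP w z = ψ (dCm w)) ∧
        wtv z ≤ wt3 ξ) ∨
      (∃ z : SD0 → F2,
        ((∀ x : SD1 → F2, dotP (dD0 x) z = 0) ∧
          ¬ ∃ ψ : (SDm → F2) →ₗ[F2] F2, ∀ w : SD0 → F2, dotP w z = ψ (dDm w)) ∧
        wtv z ≤ wt3 ξ) := by
  intro ξ hcoc hncob
  classical
  -- basic dot product lemmas
  have dotP_zero : ∀ {α : Type} [Fintype α] (z : α → F2), dotP 0 z = 0 := by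
    intro α _ z; simp [dotP]
  -- concrete formula for the coequalizer map
  have coeq_apply : ∀ (a : SC0 → F2) (p q : T0 → F2) (c : Tm → F2) (b : SD0 → F2),
      sandCoeq0 ιC ιD (a, ((p, (q, c)), b)) =
        (a + incl ιC p, (c, b + incl ιD q)) := by
    intro a p q c b
    simp [sandCoeq0, LinearMap.prod_apply, LinearMap.add_apply, LinearMap.comp_apply,
      LinearMap.fst_apply, LinearMap.snd_apply]
  -- ξ.1 is a cocycle of C
  have hCc : ∀ x : SC1 → F2, dotP (dC0 x) ξ.1 = 0 := by
    intro x
    have h := hcoc (x, (0, 0))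
    simpa [dot3, LinearMap.prodMap_apply, map_zero, coeq_apply, dotP_zero] using h
  -- ξ.2.2 is a cocycle of D
  have hDc : ∀ y : SD1 → F2, dotP (dD0 y) ξ.2.2 = 0 := by
    intro y
    have h := hcoc (0, (0, y))
    simpa [dot3, LinearMap.prodMap_apply, map_zero, coeq_apply, dotP_zero] using h
  -- the middle cocycle relation
  have hrel : ∀ s : T0 → F2,
      dotP (incl ιC s) ξ.1 + dotP (dV s) ξ.2.1 + dotP (incl ιD s) ξ.2.2 = 0 := by
    intro s
    have h := hcoc (0, (s, 0))
    simpa [dot3, LinearMap.prodMap_apply, map_zero, coeq_apply, sandD0,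
      LinearMap.prod_apply, LinearMap.id_apply] using h
  by_cases hψC : ∃ ψC : (SCm → F2) →ₗ[F2] F2, ∀ w : SC0 → F2, dotP w ξ.1 = ψC (dCm w)
  case neg =>
    left
    exact ⟨ξ.1, ⟨hCc, hψC⟩, by unfold wt3; omega⟩
  by_cases hψD : ∃ ψD : (SDm → F2) →ₗ[F2] F2, ∀ w : SD0 → F2, dotP w ξ.2.2 = ψD (dDm w)
  case neg =>
    right
    exact ⟨ξ.2.2, ⟨hDc, hψD⟩, by unfold wt3; omega⟩
  obtain ⟨ψC, hψC⟩ := hψC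
  obtain ⟨ψD, hψD⟩ := hψD
  exfalso
  apply hncob
  have hfC' : ∀ s, dCm (incl ιC s) = fm (dV s) := fun s => by
    simpa using LinearMap.congr_fun hfC s
  have hgD' : ∀ s, dDm (incl ιD s) = gm (dV s) := fun s => by
    simpa using LinearMap.congr_fun hgD s
  have key : ∀ t : Tm → F2, ψC (fm t) + ψD (gm t) = dotP t ξ.2.1 := by
    intro t
    obtain ⟨s, rfl⟩ := hdV t
    have h := hrel s
    rw [hψC, hψD, hfC', hgD'] at h
    have h2 : (2 : F2) = 0 := rfl
    linear_combination h - dotP (dV s) ξ.2.1 * h2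
  set N := (LinearMap.range (fm.prod (lWm.prod (0 : (Tm → F2) →ₗ[F2] (SDm → F2)))) ⊔
      LinearMap.range ((0 : (Tm → F2) →ₗ[F2] (SCm → F2)).prod (rWm.prod gm))) with hN
  set φ : ((SCm → F2) × (((Tm → F2) × (Tm → F2)) × (SDm → F2))) →ₗ[F2] F2 :=
    (ψC.comp (LinearMap.fst F2 _ _)) +
    ((ψC.comp fm).comp ((LinearMap.fst F2 (Tm → F2) (Tm → F2)).comp
      ((LinearMap.fst F2 ((Tm → F2) × (Tm → F2)) (SDm → F2)).comp
        (LinearMap.snd F2 (SCm → F2) _)))) +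
    ((ψD.comp gm).comp ((LinearMap.snd F2 (Tm → F2) (Tm → F2)).comp
      ((LinearMap.fst F2 ((Tm → F2) × (Tm → F2)) (SDm → F2)).comp
        (LinearMap.snd F2 (SCm → F2) _)))) +
    (ψD.comp ((LinearMap.snd F2 ((Tm → F2) × (Tm → F2)) (SDm → F2)).comp
      (LinearMap.snd F2 (SCm → F2) _))) with hφ
  have φ_apply : ∀ x : ((SCm → F2) × (((Tm → F2) × (Tm → F2)) × (SDm → F2))),
      φ x = ψC x.1 + ψC (fm x.2.1.1) + ψD (gm x.2.1.2) + ψD x.2.2 := by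
    intro x
    simp [hφ, LinearMap.add_apply, LinearMap.comp_apply, LinearMap.fst_apply,
      LinearMap.snd_apply]
  have hNker : N ≤ LinearMap.ker φ := by
    rw [hN]
    apply sup_le
    · rintro x ⟨t, rfl⟩
      simp [LinearMap.mem_ker, φ_apply, LinearMap.prod_apply, lWm, map_zero,
        CharTwo.add_self_eq_zero]
    · rintro x ⟨t, rfl⟩
      simp [LinearMap.mem_ker, φ_apply, LinearMap.prod_apply, rWm, map_zero,
        CharTwo.add_self_eq_zero]
  refine ⟨N.liftQ φ hNker, ?_⟩
  intro z
  have hz : sandCoeq0 ιC ιD (z.1, ((0, (0, z.2.1)), z.2.2)) = z := by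
    rw [coeq_apply]; simp
  have h2 := LinearMap.congr_fun hdTm (z.1, ((0, (0, z.2.1)), z.2.2))
  simp only [LinearMap.comp_apply] at h2
  rw [hz] at h2
  rw [h2]
  have h3 : (dCm.prodMap ((sandDm dV).prodMap dDm)) (z.1, ((0, (0, z.2.1)), z.2.2)) =
      (dCm z.1, ((z.2.1, z.2.1), dDm z.2.2)) := by
    simp [sandDm, LinearMap.prodMap_apply, LinearMap.prod_apply, LinearMap.add_apply,
      LinearMap.comp_apply, LinearMap.fst_apply, LinearMap.snd_apply, map_zero]
  rw [h3, Submodule.mkQ_apply, Submodule.liftQ_apply, φ_apply]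
  rw [dot3, ← hψC z.1, ← hψD z.2.2, ← key z.2.1]
  ring
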